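/- Generalized Watson's Lemma: let f : (0,∞) → ℂ be integrable with Laplace transform L[f](ζ) = ∫_0^∞ f(x) e^{-ζx} dx converging for some ζ_0 ∈ ℂ, and suppose f(x) = Σ_{n=0}^N a_n x^{β_n - 1} + o(x^{β_N - 1}) as x → 0+, where Re β_0 > 0 and Re β_n > Re β_{n-1}. Then L[f](ζ) = Σ_{n=0}^N a_n Γ(β_n) ζ^{-β_n} + o(ζ^{-β_N}) as ζ → ∞ in any sector |arg ζ| ≤ π/2 − δ, 0 < δ ≤ π/2. -/

import Mathlib

/-!
Subtract the expansion: the remainder `g = f - ∑ aₙ x^(βₙ-1)` is `o(x^(ρ-1))` at `0⁺`, with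
`ρ = Re β_N`. Near `0` its Laplace transform is then at most
`ε ∫ x^(ρ-1) e^(-x Re ζ) dx = ε Γ(ρ) (Re ζ)^(-ρ)`, and beyond any fixed `T > 0` it decays like
`e^(-T Re ζ)`, so `L[g](ζ) = o((Re ζ)^(-ρ))` as `Re ζ → ∞`. The power terms transform exactly,
`L[x^(β-1)](ζ) = Γ(β) ζ^(-β)`: for real `ζ > 0` by scaling, for `Re ζ > 0` by analytic
continuation. In the sector `Re ζ ≥ sin δ ‖ζ‖`, and `‖ζ^(-β)‖ ≍ ‖ζ‖^(-Re β)` because `arg ζ` is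
bounded.
-/

open MeasureTheory Filter Finset

/-- The filter `ζ → ∞` within the sector `|arg ζ| ≤ π/2 − δ`. -/
noncomputable def sectorFilter (δ : ℝ) : Filter ℂ :=
  comap (fun ζ : ℂ => ‖ζ‖) atTop ⊓ 𝓟 {ζ : ℂ | |Complex.arg ζ| ≤ Real.pi / 2 - δ}

open Set Asymptotics Topology

def LaplaceConvergent (φ : ℝ → ℂ) (ζ : ℂ) : Prop :=
  IntegrableOn (fun x : ℝ => φ x * Complex.exp (-ζ * x)) (Set.Ioi 0)

noncomputable def laplace (φ : ℝ → ℂ) (ζ : ℂ) : ℂ :=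
  ∫ x in Set.Ioi (0 : ℝ), φ x * Complex.exp (-ζ * x)

lemma norm_cexp_neg_mul_ofReal (ζ : ℂ) (x : ℝ) :
    ‖Complex.exp (-ζ * x)‖ = Real.exp (-(ζ.re * x)) := by
  simp [Complex.norm_exp]

namespace LaplaceConvergent

variable {φ ψ : ℝ → ℂ} {σ ζ : ℂ}

lemma of_re_le (hφ : LaplaceConvergent φ σ) (h : σ.re ≤ ζ.re) : LaplaceConvergent φ ζ := by
  have hbdd : ∀ᵐ x : ℝ ∂(volume.restrict (Ioi 0)), ‖Complex.exp (-(ζ - σ) * x)‖ ≤ 1 := by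
    filter_upwards [ae_restrict_mem measurableSet_Ioi] with x (hx : 0 < x)
    rw [norm_cexp_neg_mul_ofReal, Real.exp_le_one_iff, Complex.sub_re]
    nlinarith
  refine IntegrableOn.congr_fun (hφ.mul_bdd (Continuous.aestronglyMeasurable (by fun_prop)) hbdd)
    (fun x _ => ?_) measurableSet_Ioi
  simp only [mul_assoc, ← Complex.exp_add]
  ring_nf

lemma sub (hφ : LaplaceConvergent φ ζ) (hψ : LaplaceConvergent ψ ζ) :
    LaplaceConvergent (fun x => φ x - ψ x) ζ :=
  IntegrableOn.congr_fun (Integrable.sub hφ hψ) (fun x _ => by simp [sub_mul]) measurableSet_Ioi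

lemma const_mul (hφ : LaplaceConvergent φ ζ) (c : ℂ) :
    LaplaceConvergent (fun x => c * φ x) ζ :=
  IntegrableOn.congr_fun (Integrable.const_mul hφ c) (fun x _ => by simp [mul_assoc])
    measurableSet_Ioi

lemma finsetSum {ι : Type*} {s : Finset ι} {φ : ι → ℝ → ℂ}
    (hφ : ∀ i ∈ s, LaplaceConvergent (φ i) ζ) :
    LaplaceConvergent (fun x => ∑ i ∈ s, φ i x) ζ :=
  IntegrableOn.congr_fun (integrable_finsetSum s hφ) (fun x _ => by simp [Finset.sum_mul])
    measurableSet_Ioi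

end LaplaceConvergent

lemma laplace_sub {φ ψ : ℝ → ℂ} {ζ : ℂ} (hφ : LaplaceConvergent φ ζ)
    (hψ : LaplaceConvergent ψ ζ) :
    laplace (fun x => φ x - ψ x) ζ = laplace φ ζ - laplace ψ ζ := by
  simp only [laplace, sub_mul]
  exact integral_sub hφ hψ

lemma laplace_const_mul (φ : ℝ → ℂ) (c ζ : ℂ) :
    laplace (fun x => c * φ x) ζ = c * laplace φ ζ := by
  simp only [laplace, mul_assoc]
  exact integral_const_mul c _

lemma laplace_finsetSum {ι : Type*} {s : Finset ι} {φ : ι → ℝ → ℂ} {ζ : ℂ}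
    (hφ : ∀ i ∈ s, LaplaceConvergent (φ i) ζ) :
    laplace (fun x => ∑ i ∈ s, φ i x) ζ = ∑ i ∈ s, laplace (φ i) ζ := by
  simp only [laplace, Finset.sum_mul]
  exact integral_finsetSum s hφ

lemma norm_cpow_mul_cexp_neg_mul {x : ℝ} (hx : 0 < x) (b ζ : ℂ) :
    ‖(x : ℂ) ^ (b - 1) * Complex.exp (-ζ * x)‖ = x ^ (b.re - 1) * Real.exp (-(ζ.re * x)) := by
  rw [norm_mul, Complex.norm_cpow_eq_rpow_re_of_pos hx, norm_cexp_neg_mul_ofReal, Complex.sub_re,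
    Complex.one_re]

lemma integrableOn_rpow_mul_exp_neg_mul {s c : ℝ} (hs : -1 < s) (hc : 0 < c) :
    IntegrableOn (fun x : ℝ => x ^ s * Real.exp (-(c * x))) (Ioi 0) := by
  simpa using integrableOn_rpow_mul_exp_neg_mul_rpow hs one_pos hc

lemma laplaceConvergent_cpow {b ζ : ℂ} (hb : 0 < b.re) (hζ : 0 < ζ.re) :
    LaplaceConvergent (fun x => (x : ℂ) ^ (b - 1)) ζ := by
  refine Integrable.mono' (integrableOn_rpow_mul_exp_neg_mul (s := b.re - 1) (by linarith) hζ)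
    (by fun_prop) ?_
  filter_upwards [ae_restrict_mem measurableSet_Ioi] with x (hx : 0 < x)
  rw [norm_cpow_mul_cexp_neg_mul hx]

lemma differentiableOn_laplace_cpow {b : ℂ} (hb : 0 < b.re) :
    DifferentiableOn ℂ (laplace fun x => (x : ℂ) ^ (b - 1)) {ζ | 0 < ζ.re} := by
  intro ζ₀ (hζ₀ : 0 < ζ₀.re)
  have hε : 0 < ζ₀.re / 2 := by positivity
  have hre : ∀ ζ ∈ Metric.ball ζ₀ (ζ₀.re / 2), ζ₀.re / 2 ≤ ζ.re := fun ζ hζ => by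
    have := (Complex.abs_re_le_norm (ζ - ζ₀)).trans_lt (mem_ball_iff_norm.mp hζ)
    rw [Complex.sub_re] at this
    linarith [abs_lt.mp this]
  have key := hasDerivAt_integral_of_dominated_loc_of_deriv_le
    (F := fun ζ (x : ℝ) => (x : ℂ) ^ (b - 1) * Complex.exp (-ζ * x))
    (F' := fun ζ (x : ℝ) => -(x : ℂ) * ((x : ℂ) ^ (b - 1) * Complex.exp (-ζ * x)))
    (bound := fun x : ℝ => x ^ b.re * Real.exp (-(ζ₀.re / 2 * x)))
    (Metric.ball_mem_nhds ζ₀ hε) (Eventually.of_forall fun ζ => by fun_prop)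
    (laplaceConvergent_cpow hb hζ₀) (by fun_prop) ?_
    (integrableOn_rpow_mul_exp_neg_mul (by linarith) hε) ?_
  · exact key.2.differentiableAt.differentiableWithinAt
  · filter_upwards [ae_restrict_mem measurableSet_Ioi] with x (hx : 0 < x) ζ hζ
    rw [norm_mul, norm_cpow_mul_cexp_neg_mul hx, norm_neg, Complex.norm_real,
      Real.norm_of_nonneg hx.le,
      ← mul_assoc, Real.rpow_sub_one hx.ne', mul_div_cancel₀ _ hx.ne']
    gcongr
    exact hre ζ hζ
  · refine Eventually.of_forall fun x ζ _ => ?_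
    have hlin : HasDerivAt (fun ζ : ℂ => -ζ * x) (-x) ζ := by
      simpa using (hasDerivAt_neg ζ).mul_const (x : ℂ)
    exact (hlin.cexp.const_mul _).congr_deriv (by ring)

lemma laplace_cpow {b ζ : ℂ} (hb : 0 < b.re) (hζ : 0 < ζ.re) :
    laplace (fun x => (x : ℂ) ^ (b - 1)) ζ = Complex.Gamma b * ζ ^ (-b) := by
  have hU : IsOpen {ζ : ℂ | 0 < ζ.re} := isOpen_lt continuous_const Complex.continuous_re
  have hF₁ := (differentiableOn_laplace_cpow hb).analyticOnNhd hU
  have hF₂ : AnalyticOnNhd ℂ (fun ζ : ℂ => Complex.Gamma b * ζ ^ (-b)) {ζ | 0 < ζ.re} :=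
    DifferentiableOn.analyticOnNhd (fun ζ hζ =>
      ((differentiableAt_id.cpow_const (Or.inl hζ)).const_mul _).differentiableWithinAt) hU
  have hreal : ∀ r : ℝ, 0 < r →
      laplace (fun x => (x : ℂ) ^ (b - 1)) r = Complex.Gamma b * (r : ℂ) ^ (-b) := by
    intro r hr
    have h := Complex.integral_cpow_mul_exp_neg_mul_Ioi hb hr
    simp only [laplace, neg_mul]
    rw [h, one_div, Complex.inv_cpow _ _ (by simp [Complex.arg_ofReal_of_nonneg hr.le,
      Real.pi_ne_zero.symm]), ← Complex.cpow_neg, mul_comm]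
  have hray : Tendsto (fun r : ℝ => (r : ℂ)) (𝓝[>] 1) (𝓝[≠] 1) :=
    tendsto_nhdsWithin_iff.mpr ⟨(Complex.continuous_ofReal.tendsto' 1 1 (by simp)).mono_left
      nhdsWithin_le_nhds, eventually_nhdsWithin_of_forall fun r (hr : 1 < r) => by
        simpa using hr.ne'⟩
  have hfreq : ∃ᶠ z in 𝓝[≠] 1, laplace (fun x => (x : ℂ) ^ (b - 1)) z =
      Complex.Gamma b * z ^ (-b) :=
    hray.frequently (eventually_nhdsWithin_of_forall fun r (hr : r ∈ Set.Ioi (1 : ℝ)) =>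
      hreal r (one_pos.trans hr)).frequently
  exact hF₁.eqOn_of_preconnected_of_frequently_eq hF₂ (convex_halfSpace_re_gt 0).isPreconnected
    (by simp : (1 : ℂ) ∈ {ζ : ℂ | 0 < ζ.re}) hfreq hζ

lemma norm_setIntegral_Ioc_mul_cexp_le {g : ℝ → ℂ} {ρ C T : ℝ} {ζ : ℂ} (hρ : 0 < ρ)
    (hC : 0 ≤ C) (hζ : 0 < ζ.re) (hg : ∀ x ∈ Set.Ioc 0 T, ‖g x‖ ≤ C * x ^ (ρ - 1)) :
    ‖∫ x in Set.Ioc 0 T, g x * Complex.exp (-ζ * x)‖ ≤ C * Real.Gamma ρ * ζ.re ^ (-ρ) := by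
  have hint : IntegrableOn (fun x : ℝ => C * (x ^ (ρ - 1) * Real.exp (-(ζ.re * x)))) (Set.Ioi 0) :=
    (integrableOn_rpow_mul_exp_neg_mul (by linarith) hζ).const_mul C
  calc ‖∫ x in Set.Ioc 0 T, g x * Complex.exp (-ζ * x)‖
      ≤ ∫ x in Set.Ioc 0 T, C * (x ^ (ρ - 1) * Real.exp (-(ζ.re * x))) := by
        refine norm_integral_le_of_norm_le (hint.mono_set Ioc_subset_Ioi_self) ?_
        filter_upwards [ae_restrict_mem measurableSet_Ioc] with x hx
        rw [norm_mul, norm_cexp_neg_mul_ofReal, ← mul_assoc]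
        gcongr
        exact hg x hx
    _ ≤ ∫ x in Set.Ioi 0, C * (x ^ (ρ - 1) * Real.exp (-(ζ.re * x))) := by
        refine setIntegral_mono_set hint ?_ Ioc_subset_Ioi_self.eventuallyLE
        filter_upwards [ae_restrict_mem measurableSet_Ioi] with x (hx : 0 < x)
        positivity
    _ = C * Real.Gamma ρ * ζ.re ^ (-ρ) := by
        rw [integral_const_mul, Real.integral_rpow_mul_exp_neg_mul_Ioi hρ hζ, one_div,
          Real.inv_rpow hζ.le, ← Real.rpow_neg hζ.le]
        ring

lemma norm_setIntegral_Ioi_mul_cexp_le {φ : ℝ → ℂ} {σ ζ : ℂ} {T : ℝ}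
    (hφ : LaplaceConvergent φ σ) (hT : 0 ≤ T) (h : σ.re ≤ ζ.re) :
    ‖∫ x in Set.Ioi T, φ x * Complex.exp (-ζ * x)‖ ≤
      (∫ x in Set.Ioi 0, ‖φ x * Complex.exp (-σ * x)‖) * Real.exp (-((ζ.re - σ.re) * T)) := by
  have hsub : Set.Ioi T ⊆ Set.Ioi 0 := Ioi_subset_Ioi hT
  calc ‖∫ x in Set.Ioi T, φ x * Complex.exp (-ζ * x)‖
      ≤ ∫ x in Set.Ioi T, ‖φ x * Complex.exp (-σ * x)‖ * Real.exp (-((ζ.re - σ.re) * T)) := by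
        refine norm_integral_le_of_norm_le
          (IntegrableOn.mono_set (Integrable.mul_const hφ.norm _) hsub) ?_
        filter_upwards [ae_restrict_mem measurableSet_Ioi] with x (hx : T < x)
        rw [norm_mul, norm_mul, norm_cexp_neg_mul_ofReal, norm_cexp_neg_mul_ofReal, mul_assoc,
          ← Real.exp_add]
        gcongr
        nlinarith
    _ ≤ (∫ x in Set.Ioi 0, ‖φ x * Complex.exp (-σ * x)‖) * Real.exp (-((ζ.re - σ.re) * T)) := by
        rw [integral_mul_const]
        exact mul_le_mul_of_nonneg_right (setIntegral_mono_set hφ.norm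
          (Eventually.of_forall fun _ => norm_nonneg _) hsub.eventuallyLE) (Real.exp_pos _).le

theorem laplace_isLittleO_re_rpow {g : ℝ → ℂ} {σ : ℂ} {ρ : ℝ} (hρ : 0 < ρ)
    (hg : LaplaceConvergent g σ) (hasym : g =o[𝓝[>] 0] fun x => x ^ (ρ - 1)) :
    laplace g =o[comap Complex.re atTop] fun ζ => ζ.re ^ (-ρ) := by
  rw [isLittleO_iff]
  intro ε hε
  have hΓ : 0 < Real.Gamma ρ := Real.Gamma_pos_of_pos hρ
  have hC : 0 < ε / 2 / Real.Gamma ρ := by positivity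
  obtain ⟨T, hT, hnear⟩ : ∃ T > 0, ∀ x ∈ Set.Ioc 0 T,
      ‖g x‖ ≤ ε / 2 / Real.Gamma ρ * x ^ (ρ - 1) := by
    obtain ⟨T, hT, hsub⟩ := mem_nhdsGT_iff_exists_Ioc_subset.mp (hasym.bound hC)
    refine ⟨T, hT, fun x hx => ?_⟩
    simpa [abs_of_nonneg (Real.rpow_nonneg hx.1.le _)] using hsub hx
  have htail : (fun ζ : ℂ => ∫ x in Set.Ioi T, g x * Complex.exp (-ζ * x))
      =o[comap Complex.re atTop] fun ζ => ζ.re ^ (-ρ) := by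
    refine IsBigO.trans_isLittleO (g := fun ζ : ℂ => Real.exp (-T * ζ.re)) ?_
      ((isLittleO_exp_neg_mul_rpow_atTop hT (-ρ)).comp_tendsto tendsto_comap)
    refine IsBigO.of_bound
      ((∫ x in Set.Ioi 0, ‖g x * Complex.exp (-σ * x)‖) * Real.exp (σ.re * T)) ?_
    filter_upwards [tendsto_comap.eventually (eventually_ge_atTop σ.re)] with ζ hζ
    refine (norm_setIntegral_Ioi_mul_cexp_le hg hT.le hζ).trans (le_of_eq ?_)
    rw [Real.norm_of_nonneg (Real.exp_pos _).le, mul_assoc, ← Real.exp_add]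
    ring_nf
  filter_upwards [htail.bound (half_pos hε),
    tendsto_comap.eventually (eventually_ge_atTop (max σ.re 1))] with ζ htailζ hζ
  have hζσ : σ.re ≤ ζ.re := le_of_max_le_left hζ
  have hζ0 : 0 < ζ.re := one_pos.trans_le (le_of_max_le_right hζ)
  have hgζ := hg.of_re_le hζσ
  have hsplit : laplace g ζ = (∫ x in Set.Ioc 0 T, g x * Complex.exp (-ζ * x)) +
      ∫ x in Set.Ioi T, g x * Complex.exp (-ζ * x) := by
    rw [laplace, ← setIntegral_union (Ioc_disjoint_Ioi le_rfl) measurableSet_Ioi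
      (hgζ.mono_set Ioc_subset_Ioi_self) (hgζ.mono_set (Ioi_subset_Ioi hT.le)),
      Ioc_union_Ioi_eq_Ioi hT.le]
  rw [Real.norm_of_nonneg (Real.rpow_nonneg hζ0.le _)] at htailζ ⊢
  calc ‖laplace g ζ‖ ≤ ‖∫ x in Set.Ioc 0 T, g x * Complex.exp (-ζ * x)‖ +
        ‖∫ x in Set.Ioi T, g x * Complex.exp (-ζ * x)‖ := hsplit ▸ norm_add_le _ _
    _ ≤ ε / 2 / Real.Gamma ρ * Real.Gamma ρ * ζ.re ^ (-ρ) + ε / 2 * ζ.re ^ (-ρ) :=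
        add_le_add (norm_setIntegral_Ioc_mul_cexp_le hρ hC.le hζ0 hnear) htailζ
    _ = ε * ζ.re ^ (-ρ) := by field_simp; ring

lemma laplaceConvergent_sum_cpow {ι : Type*} {s : Finset ι} (a β : ι → ℂ)
    (hβ : ∀ i ∈ s, 0 < (β i).re) {ζ : ℂ} (hζ : 0 < ζ.re) :
    LaplaceConvergent (fun x => ∑ i ∈ s, a i * (x : ℂ) ^ (β i - 1)) ζ :=
  LaplaceConvergent.finsetSum fun i hi => (laplaceConvergent_cpow (hβ i hi) hζ).const_mul (a i)

lemma laplace_sum_cpow {ι : Type*} {s : Finset ι} (a β : ι → ℂ)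
    (hβ : ∀ i ∈ s, 0 < (β i).re) {ζ : ℂ} (hζ : 0 < ζ.re) :
    laplace (fun x => ∑ i ∈ s, a i * (x : ℂ) ^ (β i - 1)) ζ =
      ∑ i ∈ s, a i * Complex.Gamma (β i) * ζ ^ (-β i) := by
  rw [laplace_finsetSum fun i hi => (laplaceConvergent_cpow (hβ i hi) hζ).const_mul (a i)]
  refine Finset.sum_congr rfl fun i hi => ?_
  rw [laplace_const_mul, laplace_cpow (hβ i hi) hζ, mul_assoc]

lemma sin_mul_norm_le_re {δ : ℝ} (hδ : 0 ≤ δ) {ζ : ℂ} (h : |ζ.arg| ≤ Real.pi / 2 - δ) :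
    Real.sin δ * ‖ζ‖ ≤ ζ.re := by
  rw [← Complex.norm_mul_cos_arg, mul_comm, ← Real.cos_abs ζ.arg, ← Real.cos_pi_div_two_sub]
  gcongr
  exact Real.cos_le_cos_of_nonneg_of_le_pi (abs_nonneg _) (by linarith [Real.pi_pos]) h

lemma eventually_sin_mul_norm_le_re_sectorFilter {δ : ℝ} (hδ : 0 ≤ δ) :
    ∀ᶠ ζ in sectorFilter δ, Real.sin δ * ‖ζ‖ ≤ ζ.re :=
  (eventually_principal.mpr fun _ hζ => sin_mul_norm_le_re hδ hζ).filter_mono inf_le_right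

lemma tendsto_norm_sectorFilter (δ : ℝ) : Tendsto (fun ζ : ℂ => ‖ζ‖) (sectorFilter δ) atTop :=
  tendsto_comap.mono_left inf_le_left

lemma tendsto_re_sectorFilter {δ : ℝ} (hδ : 0 < δ) (hδπ : δ ≤ Real.pi / 2) :
    Tendsto Complex.re (sectorFilter δ) atTop :=
  tendsto_atTop_mono' _ (eventually_sin_mul_norm_le_re_sectorFilter hδ.le)
    ((tendsto_norm_sectorFilter δ).const_mul_atTop
      (Real.sin_pos_of_pos_of_lt_pi hδ (by linarith [Real.pi_pos])))

lemma re_rpow_isBigO_cpow_sectorFilter {δ : ℝ} (hδ : 0 < δ) (hδπ : δ ≤ Real.pi / 2) {β : ℂ}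
    (hβ : 0 ≤ β.re) :
    (fun ζ : ℂ => ζ.re ^ (-β.re)) =O[sectorFilter δ] fun ζ => ζ ^ (-β) := by
  have hsin : 0 < Real.sin δ := Real.sin_pos_of_pos_of_lt_pi hδ (by linarith [Real.pi_pos])
  have hne : ∀ᶠ ζ in sectorFilter δ, ζ ≠ 0 :=
    ((tendsto_norm_sectorFilter δ).eventually (eventually_gt_atTop 0)).mono
      fun _ => norm_pos_iff.mp
  have hnorm : (fun ζ : ℂ => ζ.re ^ (-β.re)) =O[sectorFilter δ] fun ζ => ‖ζ‖ ^ (-β.re) := by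
    refine IsBigO.of_bound (Real.sin δ ^ (-β.re)) ?_
    filter_upwards [eventually_sin_mul_norm_le_re_sectorFilter hδ.le, hne] with ζ hre hζ
    have hpos : 0 < Real.sin δ * ‖ζ‖ := mul_pos hsin (norm_pos_iff.mpr hζ)
    rw [Real.norm_of_nonneg (Real.rpow_nonneg (hpos.le.trans hre) _),
      Real.norm_of_nonneg (Real.rpow_nonneg (norm_nonneg _) _),
      ← Real.mul_rpow hsin.le (norm_nonneg _)]
    exact Real.rpow_le_rpow_of_nonpos hpos hre (neg_nonpos.mpr hβ)
  refine hnorm.trans ?_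
  simpa using (Complex.isTheta_cpow_const_rpow (b := -β) fun _ _ => hne).symm.isBigO

/-- Generalized Watson's Lemma: if `f` has Laplace transform converging at some `ζ₀`
and `f(x) = Σ_{n≤N} aₙ x^{βₙ-1} + o(x^{β_N-1})` as `x → 0⁺` with `Re β₀ > 0` and
`Re βₙ` strictly increasing, then
`L[f](ζ) = Σ_{n≤N} aₙ Γ(βₙ) ζ^{-βₙ} + o(ζ^{-β_N})` as `ζ → ∞` in any sector
`|arg ζ| ≤ π/2 − δ`, `0 < δ ≤ π/2`. -/
theorem generalized_watson_lemma (f : ℝ → ℂ) (N : ℕ) (a β : ℕ → ℂ)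
    (hβ0 : 0 < (β 0).re) (hβmono : ∀ n, n < N → (β n).re < (β (n + 1)).re)
    (ζ0 : ℂ)
    (hconv : IntegrableOn (fun x : ℝ => f x * Complex.exp (-ζ0 * x)) (Set.Ioi 0))
    (hasym : (fun x : ℝ => f x - ∑ n ∈ range (N + 1), a n * (x : ℂ) ^ (β n - 1))
      =o[nhdsWithin 0 (Set.Ioi 0)] fun x : ℝ => (x : ℂ) ^ (β N - 1)) :
    ∀ δ : ℝ, 0 < δ → δ ≤ Real.pi / 2 →
      (fun ζ : ℂ => (∫ x in Set.Ioi (0:ℝ), f x * Complex.exp (-ζ * x)) -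
          ∑ n ∈ range (N + 1), a n * Complex.Gamma (β n) * ζ ^ (-β n))
        =o[sectorFilter δ] fun ζ : ℂ => ζ ^ (-β N) := by
  intro δ hδ hδπ
  have hβpos : ∀ n ∈ range (N + 1), 0 < (β n).re := by
    intro n hn
    induction n with
    | zero => exact hβ0
    | succ k ih =>
      rw [Finset.mem_range] at hn
      exact (ih (Finset.mem_range.mpr (by omega))).trans (hβmono k (by omega))
  set σ : ℂ := ((max ζ0.re 1 : ℝ) : ℂ)
  have hσ : 0 < σ.re := by simp [σ]
  have hf : LaplaceConvergent f σ := LaplaceConvergent.of_re_le hconv (by simp [σ])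
  have hrem : (fun x => f x - ∑ n ∈ range (N + 1), a n * (x : ℂ) ^ (β n - 1))
      =o[𝓝[>] 0] fun x : ℝ => x ^ ((β N).re - 1) :=
    hasym.norm_right.congr' EventuallyEq.rfl (eventually_nhdsWithin_of_forall
      fun x (hx : 0 < x) => by simp [Complex.norm_cpow_eq_rpow_re_of_pos hx])
  have hρ : 0 < (β N).re := hβpos N (self_mem_range_succ N)
  have hre := tendsto_re_sectorFilter hδ hδπ
  have hlaplace_rem : laplace (fun x => f x - ∑ n ∈ range (N + 1), a n * (x : ℂ) ^ (β n - 1))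
      =o[sectorFilter δ] fun ζ : ℂ => ζ ^ (-β N) :=
    ((laplace_isLittleO_re_rpow hρ (hf.sub (laplaceConvergent_sum_cpow a β hβpos hσ))
      hrem).mono hre.le_comap).trans_isBigO (re_rpow_isBigO_cpow_sectorFilter hδ hδπ hρ.le)
  refine hlaplace_rem.congr' ?_ EventuallyEq.rfl
  filter_upwards [hre.eventually (eventually_ge_atTop σ.re)] with ζ hζ
  have hζ0 : 0 < ζ.re := hσ.trans_le hζ
  rw [laplace_sub (hf.of_re_le hζ) (laplaceConvergent_sum_cpow a β hβpos hζ0),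
    laplace_sum_cpow a β hβpos hζ0]
  rfl
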